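/- For 0 < α < 1, the Green matrix g(n,j) = Φ(j) C(n,j) ∑_{a=0}^{n-j} C(n-j,a)(-1)^a/Φ(j+a) with Φ(n) = [1+α]_{n-1}/(n-1)! evaluates to g(n,j) = C(n,j)[α]_j / ((α+n-j)(α+n-j+1)⋯(α+n-1)) for 1 ≤ j ≤ n. -/

import Mathlib

/-!
With `B(k+1, x) = k! / [x]_{k+1}`, the hypothesis on `Φ` says `Φ(k+1)⁻¹ = α B(k+1, α)`, so the
sum in `g(n, j)` is `(-1)^m Δ^m` applied to `k ↦ B(k+1, α)` at `k = j - 1`, with `m = n - j`.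
The Beta recurrence `B(k+2, x) - B(k+1, x) = -B(k+1, x+1)` gives
`Δ^m B(·+1, α) = (-1)^m B(·+1, α+m)`, and `B(j, α+m) / B(j, α) = [α]_j / [α+m]_j`.
-/

/-- The rising factorial `[x]_k = x(x+1)⋯(x+k-1)`. -/
noncomputable def risingFac (x : ℝ) (k : ℕ) : ℝ := ∏ i ∈ Finset.range k, (x + i)

/-- The Green matrix `g(n,j) = Φ(j) C(n,j) ∑_{a=0}^{n-j} C(n-j,a) (-1)^a / Φ(j+a)`. -/
noncomputable def greenG (Φ : ℕ → ℝ) (n j : ℕ) : ℝ :=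
  Φ j * (n.choose j : ℝ) *
    ∑ a ∈ Finset.range (n - j + 1), ((n - j).choose a : ℝ) * (-1 : ℝ) ^ a / Φ (j + a)

open Finset fwdDiff
open scoped Nat

lemma sum_range_choose_mul_neg_one_pow_mul_eq_fwdDiff_iter {R : Type*} [CommRing R]
    (f : ℕ → R) (m k : ℕ) :
    ∑ a ∈ range (m + 1), (m.choose a : R) * (-1) ^ a * f (k + a) = (-1) ^ m * (Δ_[1])^[m] f k := by
  rw [fwdDiff_iter_eq_sum_shift, mul_sum]
  refine sum_congr rfl fun a ha => ?_
  obtain ⟨b, rfl⟩ := Nat.exists_eq_add_of_le (Nat.lt_succ_iff.mp (mem_range.mp ha))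
  simp only [Nat.add_sub_cancel_left, smul_eq_mul, zsmul_eq_mul]
  push_cast
  have hb : (-1 : R) ^ b * (-1) ^ b = 1 := by rw [← pow_add, Even.neg_one_pow ⟨b, rfl⟩]
  rw [mul_one, pow_add]
  linear_combination -((a + b).choose a * (-1) ^ a * f (k + a) : R) * hb

lemma risingFac_pos {x : ℝ} (hx : 0 < x) (k : ℕ) : 0 < risingFac x k :=
  prod_pos fun i _ => by positivity

lemma risingFac_succ_right (x : ℝ) (k : ℕ) : risingFac x (k + 1) = risingFac x k * (x + k) :=
  prod_range_succ _ _

lemma risingFac_succ_left (x : ℝ) (k : ℕ) : risingFac x (k + 1) = x * risingFac (x + 1) k := by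
  rw [risingFac, prod_range_succ', mul_comm, Nat.cast_zero, add_zero]
  exact congrArg (x * ·) (prod_congr rfl fun i _ => by push_cast; ring)

/-- `betaSeq x k = k! / [x]_{k+1}` is the Beta value `B(k+1, x)`. -/
noncomputable def betaSeq (x : ℝ) (k : ℕ) : ℝ := k ! / risingFac x (k + 1)

lemma fwdDiff_betaSeq {x : ℝ} (hx : 0 < x) : Δ_[1] (betaSeq x) = -betaSeq (x + 1) := by
  ext k
  have hR : risingFac (x + 1) (k + 1) = risingFac x (k + 1) * (x + (k + 1)) / x := by
    rw [eq_div_iff hx.ne', mul_comm, ← risingFac_succ_left, risingFac_succ_right]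
    push_cast; rfl
  have := risingFac_pos hx (k + 1)
  simp only [fwdDiff, betaSeq, Pi.neg_apply, Nat.factorial_succ, Nat.cast_mul, hR,
    risingFac_succ_right x (k + 1)]
  field_simp
  push_cast
  ring

lemma fwdDiff_iter_betaSeq {x : ℝ} (hx : 0 < x) (m : ℕ) :
    (Δ_[1])^[m] (betaSeq x) = (-1 : ℝ) ^ m • betaSeq (x + m) := by
  induction m with
  | zero => simp
  | succ m ih =>
    rw [Function.iterate_succ_apply', ih, fwdDiff_const_smul,
      fwdDiff_betaSeq (by positivity), pow_succ, mul_neg_one, neg_smul, smul_neg]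
    push_cast
    rw [add_assoc]

lemma sum_choose_mul_neg_one_pow_mul_betaSeq {x : ℝ} (hx : 0 < x) (m k : ℕ) :
    ∑ a ∈ range (m + 1), (m.choose a : ℝ) * (-1) ^ a * betaSeq x (k + a) = betaSeq (x + m) k := by
  rw [sum_range_choose_mul_neg_one_pow_mul_eq_fwdDiff_iter, fwdDiff_iter_betaSeq hx,
    Pi.smul_apply, smul_eq_mul, ← mul_assoc, ← pow_add, Even.neg_one_pow ⟨m, rfl⟩, one_mul]

lemma betaSeq_div_betaSeq (x y : ℝ) (k : ℕ) :
    betaSeq y k / betaSeq x k = risingFac x (k + 1) / risingFac y (k + 1) :=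
  div_div_div_cancel_left' _ _ (Nat.cast_ne_zero.mpr k.factorial_ne_zero)

lemma inv_risingFac_div_factorial {x : ℝ} (hx : x ≠ 0) (k : ℕ) :
    (risingFac (1 + x) k / k !)⁻¹ = x * betaSeq x k := by
  rw [betaSeq, risingFac_succ_left, add_comm 1 x, inv_div]
  field_simp

theorem stmt17_general (α : ℝ) (hα0 : 0 < α)
    (Φ : ℕ → ℝ)
    (hΦ : ∀ n : ℕ, 1 ≤ n → Φ n = risingFac (1 + α) (n - 1) / ((n - 1).factorial : ℝ))
    (n j : ℕ) (h1 : 1 ≤ j) (h2 : j ≤ n) :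
    greenG Φ n j
      = (n.choose j : ℝ) * risingFac α j / risingFac (α + (n : ℝ) - j) j := by
  obtain ⟨k, rfl⟩ : ∃ k, j = k + 1 := ⟨j - 1, by omega⟩
  have hΦinv (a : ℕ) : (Φ (k + 1 + a))⁻¹ = α * betaSeq α (k + a) := by
    rw [hΦ _ (by omega), Nat.add_right_comm, Nat.add_sub_cancel,
      inv_risingFac_div_factorial hα0.ne']
  have hΦj : Φ (k + 1) = (α * betaSeq α k)⁻¹ := inv_eq_iff_eq_inv.mp (by simpa using hΦinv 0)
  set m := n - (k + 1) with hm
  have hsum : ∑ a ∈ range (m + 1), (m.choose a : ℝ) * (-1) ^ a / Φ (k + 1 + a)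
      = α * betaSeq (α + m) k := by
    rw [← sum_choose_mul_neg_one_pow_mul_betaSeq hα0, mul_sum]
    exact sum_congr rfl fun a _ => by rw [div_eq_mul_inv, hΦinv]; ring
  have hn : α + (n : ℝ) - (k + 1 : ℕ) = α + m := by push_cast [hm, Nat.cast_sub h2]; ring
  have hβ : betaSeq α k ≠ 0 :=
    div_ne_zero (Nat.cast_ne_zero.mpr k.factorial_ne_zero) (risingFac_pos hα0 _).ne'
  rw [greenG, ← hm, hsum, hΦj, hn, mul_div_assoc, ← betaSeq_div_betaSeq]
  field_simp

/-- In the `(α,α)` case, with `Φ(n) = [1+α]_{n-1}/(n-1)!`, the Green matrix is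
`g(n,j) = C(n,j)[α]_j / ((α+n-j)(α+n-j+1)⋯(α+n-1))`. -/
theorem stmt17 (α : ℝ) (hα0 : 0 < α) (hα1 : α < 1)
    (Φ : ℕ → ℝ)
    (hΦ : ∀ n : ℕ, 1 ≤ n → Φ n = risingFac (1 + α) (n - 1) / ((n - 1).factorial : ℝ))
    (n j : ℕ) (h1 : 1 ≤ j) (h2 : j ≤ n) :
    greenG Φ n j
      = (n.choose j : ℝ) * risingFac α j / risingFac (α + (n : ℝ) - j) j :=
  stmt17_general α hα0 Φ hΦ n j h1 h2
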